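/- arXiv:2411.06295 — 8 statements merged into one kernel-verified Lean document; each statement's English description precedes it below -/
import Mathlib

section
/- Decomposition property of personalized PageRank: for every vertex s ∈ V, π_s = α·e_s + ((1−α)/d(s))·Σ_{v : v adjacent to s} π_v. -/
open Matrix

/-!
Stack the vectors `π t` as the rows of a matrix `Π`: the defining equations say
`Π (1 - (1 - α) W) = α • 1`. Over a commutative ring a one-sided inverse of a square matrix is
two-sided, so also `(1 - (1 - α) W) Π = α • 1`, and row `s` of this identity is the decomposition,
because row `s` of `W Π` is `d(s)⁻¹ ∑_{v ∼ s} π v`.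
-/

/-- The random-walk transition matrix `W = D⁻¹ A` of a finite simple graph,
with entries `W i j = A i j / d(i)`. -/
noncomputable def walkMatrix {V : Type*} [Fintype V] [DecidableEq V]
    (G : SimpleGraph V) [DecidableRel G.Adj] : Matrix V V ℝ :=
  (Matrix.diagonal fun i => ((G.degree i : ℝ))⁻¹) * G.adjMatrix ℝ

namespace Matrix

variable {n R : Type*} [Fintype n] [DecidableEq n] [CommRing R]

theorem mul_eq_smul_one_comm {A B : Matrix n n R} {a : R} (ha : IsUnit a)
    (h : A * B = a • 1) : B * A = a • 1 := by
  obtain ⟨b, hba⟩ := ha.exists_left_inv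
  have hinv : A * (b • B) = 1 := by rw [mul_smul_comm, h, smul_smul, hba, one_smul]
  rw [mul_eq_one_comm, smul_mul_assoc] at hinv
  rw [← hinv, smul_smul, mul_comm, hba, one_smul]

theorem eq_smul_one_add_smul_mul_comm {X P : Matrix n n R} {a c : R} (ha : IsUnit a)
    (h : X = a • 1 + c • (X * P)) : X = a • 1 + c • (P * X) := by
  have hright : X * (1 - c • P) = a • 1 := by
    rw [Matrix.mul_sub, Matrix.mul_one, mul_smul_comm]
    exact sub_eq_iff_eq_add.mpr h
  have hleft := mul_eq_smul_one_comm ha hright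
  rw [Matrix.sub_mul, Matrix.one_mul, smul_mul_assoc] at hleft
  exact sub_eq_iff_eq_add.mp hleft

theorem eq_smul_single_add_smul_sum_comm {x : n → n → R} {P : Matrix n n R} {a c : R}
    (ha : IsUnit a) (hx : ∀ t, x t = a • Pi.single t 1 + c • (x t ᵥ* P)) (s : n) :
    x s = a • Pi.single s 1 + c • ∑ v, P s v • x v := by
  have hrow : ∀ t, of x t = x t := fun _ => rfl
  have hX : of x = a • 1 + c • (of x * P) := by
    ext t u
    simpa [mul_apply_eq_vecMul, one_eq_pi_single, hrow] using congrFun (hx t) u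
  funext u
  simpa [mul_apply, one_eq_pi_single, Finset.sum_apply] using
    congrFun₂ (eq_smul_one_add_smul_mul_comm ha hX) s u

end Matrix

theorem walkMatrix_apply {V : Type*} [Fintype V] [DecidableEq V]
    (G : SimpleGraph V) [DecidableRel G.Adj] (i j : V) :
    walkMatrix G i j = (G.degree i : ℝ)⁻¹ * G.adjMatrix ℝ i j :=
  diagonal_mul _ _ _ _

theorem sum_walkMatrix_smul {V M : Type*} [Fintype V] [DecidableEq V]
    (G : SimpleGraph V) [DecidableRel G.Adj] [AddCommMonoid M] [Module ℝ M] (s : V) (f : V → M) :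
    ∑ v, walkMatrix G s v • f v = (G.degree s : ℝ)⁻¹ • ∑ v ∈ G.neighborFinset s, f v := by
  simp only [walkMatrix_apply, mul_smul, ← Finset.smul_sum, SimpleGraph.adjMatrix_apply, ite_smul,
    one_smul, zero_smul]
  simp [SimpleGraph.neighborFinset_eq_filter, Finset.sum_filter]

theorem ppr_decomposition_general
    {V : Type*} [Fintype V] [DecidableEq V]
    (G : SimpleGraph V) [DecidableRel G.Adj]
    (α : ℝ) (hα : α ∈ Set.Ioo (0 : ℝ) 1)
    (π : V → V → ℝ)
    (hπ : ∀ s : V,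
      π s = α • (Pi.single s 1 : V → ℝ) + (1 - α) • ((walkMatrix G)ᵀ *ᵥ π s))
    (s : V) :
    π s = α • (Pi.single s 1 : V → ℝ) +
      ((1 - α) / (G.degree s : ℝ)) • ∑ v ∈ G.neighborFinset s, π v := by
  have hs := eq_smul_single_add_smul_sum_comm hα.1.ne'.isUnit
    (fun t => (hπ t).trans (by rw [mulVec_transpose])) s
  rwa [sum_walkMatrix_smul, smul_smul, ← div_eq_mul_inv] at hs

/-- Decomposition property of personalized PageRank: for every vertex `s`,
`π_s = α·e_s + ((1−α)/d(s)) · ∑_{v ~ s} π_v`. -/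
theorem ppr_decomposition
    {V : Type*} [Fintype V] [DecidableEq V]
    (G : SimpleGraph V) [DecidableRel G.Adj]
    (hd : ∀ u : V, 0 < G.degree u)
    (α : ℝ) (hα : α ∈ Set.Ioo (0 : ℝ) 1)
    (π : V → V → ℝ)
    (hπ : ∀ s : V,
      π s = α • (Pi.single s 1 : V → ℝ) + (1 - α) • ((walkMatrix G)ᵀ *ᵥ π s))
    (s : V) :
    π s = α • (Pi.single s 1 : V → ℝ) +
      ((1 - α) / (G.degree s : ℝ)) • ∑ v ∈ G.neighborFinset s, π v :=
  ppr_decomposition_general G α hα π hπ s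
end

section
/- Symmetry property of personalized PageRank on undirected graphs: for every pair of vertices u, v ∈ V, d(u)·π_u(v) = d(v)·π_v(u). -/
/-!
Stack the vectors `π_s` as the rows of a matrix `P`. The fixed-point equations say
`P (I - (1 - α) W) = α I`, i.e. `Q L = α I` for `Q = P D⁻¹` and the symmetric matrix
`L = D - (1 - α) A`. Then `α Qᵀ = Q L Qᵀ = α Q`, so `Q` is symmetric, which is
`π_u(v) / d(v) = π_v(u) / d(u)`.
-/

open Matrix

theorem Matrix.IsSymm.of_mul_eq_smul_one {R n : Type*} [CommRing R] [IsDomain R] [Fintype n]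
    [DecidableEq n] {Q L : Matrix n n R} {c : R} (hL : L.IsSymm) (hQL : Q * L = c • 1)
    (hc : c ≠ 0) : Q.IsSymm := by
  have hLQ : L * Qᵀ = c • 1 := by
    rw [← hL.eq, ← transpose_mul, hQL, transpose_smul, transpose_one]
  have hcQ : c • Qᵀ = c • Q := by
    rw [← one_mul Qᵀ, ← smul_mul_assoc, ← hQL, Matrix.mul_assoc, hLQ, mul_smul_comm, mul_one]
  exact smul_right_injective _ hc hcQ

theorem Matrix.eq_smul_one_add_smul_mul_of_rows {R V : Type*} [CommRing R] [Fintype V]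
    [DecidableEq V] (W P : Matrix V V R) (α : R)
    (hP : ∀ s : V, P s = α • (Pi.single s 1 : V → R) + (1 - α) • (Wᵀ *ᵥ P s)) :
    P = α • 1 + (1 - α) • (P * W) := by
  ext s x
  rw [hP s, mulVec_transpose]
  simp [one_eq_pi_single, mul_apply_eq_vecMul]

theorem mul_diagonal_inv_degree_mul_eq_smul_one {V : Type*} [Fintype V] [DecidableEq V]
    (G : SimpleGraph V) [DecidableRel G.Adj] (hd : ∀ u, (G.degree u : ℝ) ≠ 0)
    (P : Matrix V V ℝ) (α : ℝ) (hP : P = α • 1 + (1 - α) • (P * walkMatrix G)) :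
    P * diagonal (fun u => (G.degree u : ℝ)⁻¹) *
        (diagonal (fun u => (G.degree u : ℝ)) - (1 - α) • G.adjMatrix ℝ) = α • 1 := by
  have hDinvD : diagonal (fun u => (G.degree u : ℝ)⁻¹) * diagonal (fun u => (G.degree u : ℝ))
      = 1 := by
    rw [diagonal_mul_diagonal, ← diagonal_one]
    exact congrArg diagonal (funext fun u => inv_mul_cancel₀ (hd u))
  rw [Matrix.mul_sub, Matrix.mul_assoc, hDinvD, Matrix.mul_one, Matrix.mul_smul, Matrix.mul_assoc,
    ← walkMatrix, sub_eq_iff_eq_add]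
  exact hP

/-- Symmetry property of personalized PageRank on undirected graphs: for every pair of
vertices `u, v`, `d(u)·π_u(v) = d(v)·π_v(u)`. -/
theorem ppr_symmetry
    {V : Type*} [Fintype V] [DecidableEq V]
    (G : SimpleGraph V) [DecidableRel G.Adj]
    (hd : ∀ u : V, 0 < G.degree u)
    (α : ℝ) (hα : α ∈ Set.Ioo (0 : ℝ) 1)
    (π : V → V → ℝ)
    (hπ : ∀ s : V,
      π s = α • (Pi.single s 1 : V → ℝ) + (1 - α) • ((walkMatrix G)ᵀ *ᵥ π s))
    (u v : V) :
    (G.degree u : ℝ) * π u v = (G.degree v : ℝ) * π v u := by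
  have hdeg (w : V) : (G.degree w : ℝ) ≠ 0 := by exact_mod_cast (hd w).ne'
  have hL : (diagonal (fun w => (G.degree w : ℝ)) - (1 - α) • G.adjMatrix ℝ).IsSymm :=
    (isSymm_diagonal _).sub (G.isSymm_adjMatrix.smul _)
  have hQ := hL.of_mul_eq_smul_one (mul_diagonal_inv_degree_mul_eq_smul_one G hdeg (of π) α
    (eq_smul_one_add_smul_mul_of_rows _ (of π) α hπ)) hα.1.ne'
  have huv : π v u * (G.degree u : ℝ)⁻¹ = π u v * (G.degree v : ℝ)⁻¹ := by
    simpa only [mul_diagonal, of_apply] using hQ.apply u v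
  field_simp [hdeg u, hdeg v] at huv
  linarith
end

section
/- For every vertex t ∈ V, Σ_{x∈V} π_x(t)/d(t) ≤ 1; equivalently, Σ_{x∈V} π_x(t) ≤ d(t). -/
/-!
Summing the defining equations over the source `s` shows that the column sums
`S t = ∑ₛ π_s(t)` satisfy `S = α·𝟙 + (1 - α)·Wᵀ S`. Since the walk is reversible,
`d(v)·W(v,u) = d(u)·W(u,v)`, this says that `f = D⁻¹ S` satisfies
`S = α·𝟙 + (1 - α)·D (W f)`. Because `W` is row-stochastic, `(W f)(u) ≤ f(u)` at a maximiser `u`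
of `f`, whence `S u ≤ α + (1 - α)·S u`, i.e. `S u ≤ 1 ≤ d(u)`, and so `f ≤ f(u) ≤ 1`.
-/

open Matrix

open Finset

namespace Matrix

variable {R n : Type*} [Fintype n] [DecidableEq n]

lemma mulVec_apply_le_of_mem_rowStochastic [Semiring R] [PartialOrder R] [IsOrderedRing R]
    {M : Matrix n n R} (hM : M ∈ rowStochastic R n) {x : n → R} {c : R} (hx : ∀ j, x j ≤ c)
    (i : n) : (M *ᵥ x) i ≤ c :=
  calc (M *ᵥ x) i = ∑ j, M i j * x j := rfl
    _ ≤ ∑ j, M i j * c := sum_le_sum fun j _ => mul_le_mul_of_nonneg_left (hx j) (hM.1 i j)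
    _ = c := by rw [← sum_mul, sum_row_of_mem_rowStochastic hM, one_mul]

lemma sum_eq_smul_one_add_smul_mulVec_sum [CommSemiring R] {M : Matrix n n R} {a b : R}
    {π : n → n → R} (hπ : ∀ s, π s = a • Pi.single s 1 + b • M *ᵥ π s) :
    ∑ s, π s = a • 1 + b • M *ᵥ ∑ s, π s := by
  conv_lhs => rw [sum_congr rfl fun s _ => hπ s]
  rw [sum_add_distrib, ← smul_sum, ← smul_sum, ← mulVec_sum, univ_sum_single]
  rfl

end Matrix

namespace SimpleGraph

variable {V : Type*} [Fintype V] [DecidableEq V] (G : SimpleGraph V) [DecidableRel G.Adj]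

lemma walkMatrix_apply (u v : V) :
    walkMatrix G u v = (G.degree u : ℝ)⁻¹ * G.adjMatrix ℝ u v := by
  rw [walkMatrix, diagonal_mul]

lemma walkMatrix_mem_rowStochastic (hd : ∀ u, 0 < G.degree u) :
    walkMatrix G ∈ rowStochastic ℝ V := by
  refine ⟨fun u v => ?_, funext fun u => ?_⟩
  · rw [walkMatrix_apply, adjMatrix_apply]
    split_ifs <;> positivity
  · have hu : (G.degree u : ℝ) ≠ 0 := by exact_mod_cast (hd u).ne'
    rw [walkMatrix, ← mulVec_mulVec]
    simp [mulVec_diagonal, hu]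

lemma transpose_walkMatrix_mulVec_apply {v : V} (hv : 0 < G.degree v) (x : V → ℝ) :
    ((walkMatrix G)ᵀ *ᵥ x) v = G.degree v * (walkMatrix G *ᵥ fun u => x u / G.degree u) v := by
  have hv : (G.degree v : ℝ) ≠ 0 := by exact_mod_cast hv.ne'
  simp only [mulVec, dotProduct, transpose_apply, walkMatrix_apply, mul_sum]
  refine sum_congr rfl fun u _ => ?_
  simp only [adjMatrix_apply, G.adj_comm u v]
  split_ifs <;> field_simp

theorem div_degree_le_one_of_eq_smul_one_add {α : ℝ} (hα0 : 0 < α) (hα1 : α ≤ 1)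
    (hd : ∀ u, 0 < G.degree u) {S : V → ℝ}
    (hS : S = α • 1 + (1 - α) • (walkMatrix G)ᵀ *ᵥ S) (t : V) :
    S t / G.degree t ≤ 1 := by
  set f : V → ℝ := fun u => S u / G.degree u
  obtain ⟨u, -, hu⟩ := exists_max_image univ f ⟨t, mem_univ t⟩
  have hdu : (1 : ℝ) ≤ G.degree u := by exact_mod_cast hd u
  have hSu : S u = G.degree u * f u := by
    simp only [f]; field_simp
  have hWf : (walkMatrix G *ᵥ f) u ≤ f u :=
    Matrix.mulVec_apply_le_of_mem_rowStochastic (G.walkMatrix_mem_rowStochastic hd)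
      (fun v => hu v (mem_univ v)) u
  have hSu_le : S u ≤ α + (1 - α) * S u :=
    calc S u = α + (1 - α) * (G.degree u * (walkMatrix G *ᵥ f) u) := by
          conv_lhs => rw [hS]
          simp only [Pi.add_apply, Pi.smul_apply, Pi.one_apply, smul_eq_mul, mul_one,
            G.transpose_walkMatrix_mulVec_apply (hd u), f]
      _ ≤ α + (1 - α) * S u := by rw [hSu]; gcongr
  have hSu_one : S u ≤ 1 := by nlinarith
  have hfu : f u ≤ 1 := (div_le_one (by positivity)).2 (hSu_one.trans hdu)
  exact (hu t (mem_univ t)).trans hfu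

end SimpleGraph

/-- For every vertex `t`, `∑_{x∈V} π_x(t)/d(t) ≤ 1`; equivalently
`∑_{x∈V} π_x(t) ≤ d(t)`. -/
theorem ppr_column_sum_bound
    {V : Type*} [Fintype V] [DecidableEq V]
    (G : SimpleGraph V) [DecidableRel G.Adj]
    (hd : ∀ u : V, 0 < G.degree u)
    (α : ℝ) (hα : α ∈ Set.Ioo (0 : ℝ) 1)
    (π : V → V → ℝ)
    (hπ : ∀ s : V,
      π s = α • (Pi.single s 1 : V → ℝ) + (1 - α) • ((walkMatrix G)ᵀ *ᵥ π s))
    (t : V) :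
    ∑ x : V, π x t / (G.degree t : ℝ) ≤ 1 ∧ ∑ x : V, π x t ≤ (G.degree t : ℝ) := by
  have h := G.div_degree_le_one_of_eq_smul_one_add hα.1 hα.2.le hd
    (sum_eq_smul_one_add_smul_mulVec_sum hπ) t
  rw [Finset.sum_apply] at h
  exact ⟨by rwa [← sum_div], (div_le_one (by exact_mod_cast hd t)).1 h⟩
end

section
/- Characterization of the ForwardPush invariant: vectors p, r ∈ ℝ^V satisfy the ForwardPush invariant with respect to s (i.e., π_s(w) = p(w) + Σ_{x∈V} r(x)·π_x(w) for every w ∈ V) if and only if α·(e_s − r) = (I − (1−α)·Wᵀ)·p. -/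
/-!
With `M = I − (1−α)Wᵀ`, the PageRank equation says `M π_x = α e_x`, so applying `M` to
`π_s = p + ∑ₓ r(x) π_x` yields `α e_s = M p + α r`. Conversely this identity gives back the
invariant because `M` is injective: `Wᵀ` does not increase the `ℓ¹` norm and `1 − α < 1`.
-/

open Matrix

namespace Matrix

variable {n : Type*} [Fintype n] [DecidableEq n] {P : Matrix n n ℝ}

theorem sum_abs_transpose_mulVec_le (hP : P ∈ rowStochastic ℝ n) (v : n → ℝ) :
    ∑ j, |(Pᵀ *ᵥ v) j| ≤ ∑ i, |v i| :=
  calc ∑ j, |(Pᵀ *ᵥ v) j| ≤ ∑ j, ∑ i, P i j * |v i| := by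
        refine Finset.sum_le_sum fun j _ => (Finset.abs_sum_le_sum_abs _ _).trans_eq ?_
        simp only [transpose_apply, abs_mul, abs_of_nonneg (nonneg_of_mem_rowStochastic hP)]
    _ = ∑ i, (∑ j, P i j) * |v i| := by
        rw [Finset.sum_comm]
        simp only [Finset.sum_mul]
    _ = ∑ i, |v i| := by simp only [sum_row_of_mem_rowStochastic hP, one_mul]

theorem one_sub_smul_mulVec {R : Type*} [CommRing R] (A : Matrix n n R) (c : R) (v : n → R) :
    (1 - c • A) *ᵥ v = v - c • (A *ᵥ v) := by
  rw [sub_mulVec, one_mulVec, smul_mulVec]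

theorem mulVec_injective_one_sub_smul_transpose (hP : P ∈ rowStochastic ℝ n) {c : ℝ}
    (hc : |c| < 1) : Function.Injective ((1 - c • Pᵀ) *ᵥ ·) := by
  intro v w (hvw : (1 - c • Pᵀ) *ᵥ v = (1 - c • Pᵀ) *ᵥ w)
  set u := v - w
  have hu : u = c • (Pᵀ *ᵥ u) := by
    rw [← sub_eq_zero, ← one_sub_smul_mulVec, mulVec_sub, hvw, sub_self]
  have hS : ∑ i, |u i| ≤ |c| * ∑ i, |u i| :=
    calc ∑ i, |u i| = |c| * ∑ j, |(Pᵀ *ᵥ u) j| := by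
          conv_lhs => rw [hu]
          simp only [Pi.smul_apply, smul_eq_mul, abs_mul, Finset.mul_sum]
      _ ≤ |c| * ∑ i, |u i| :=
          mul_le_mul_of_nonneg_left (sum_abs_transpose_mulVec_le hP u) (abs_nonneg c)
  have hS0 : ∑ i, |u i| = 0 := by
    nlinarith [Finset.sum_nonneg fun i (_ : i ∈ Finset.univ) => abs_nonneg (u i)]
  rw [← sub_eq_zero]
  funext i
  exact abs_eq_zero.mp ((Finset.sum_eq_zero_iff_of_nonneg fun i _ => abs_nonneg (u i)).mp hS0 i
    (Finset.mem_univ i))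

end Matrix

theorem walkMatrix_mem_rowStochastic {V : Type*} [Fintype V] [DecidableEq V]
    (G : SimpleGraph V) [DecidableRel G.Adj] (hd : ∀ u : V, 0 < G.degree u) :
    walkMatrix G ∈ rowStochastic ℝ V := by
  refine mem_rowStochastic.mpr ⟨fun i j => ?_, funext fun i => ?_⟩
  · rw [walkMatrix, diagonal_mul, SimpleGraph.adjMatrix_apply]
    split_ifs <;> positivity
  · have hdeg : (G.degree i : ℝ) ≠ 0 := by exact_mod_cast (hd i).ne'
    rw [walkMatrix, ← mulVec_mulVec, mulVec_diagonal]
    simp [hdeg]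

/-- Characterization of the ForwardPush invariant: vectors `p, r` satisfy the ForwardPush
invariant with respect to `s` (i.e. `π_s(w) = p(w) + ∑_x r(x)·π_x(w)` for every `w`) if and
only if `α·(e_s − r) = (I − (1−α)·Wᵀ)·p`. -/
theorem forwardpush_invariant_iff
    {V : Type*} [Fintype V] [DecidableEq V]
    (G : SimpleGraph V) [DecidableRel G.Adj]
    (hd : ∀ u : V, 0 < G.degree u)
    (α : ℝ) (hα : α ∈ Set.Ioo (0 : ℝ) 1)
    (π : V → V → ℝ)
    (hπ : ∀ s : V,
      π s = α • (Pi.single s 1 : V → ℝ) + (1 - α) • ((walkMatrix G)ᵀ *ᵥ π s))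
    (s : V) (p r : V → ℝ) :
    (∀ w : V, π s w = p w + ∑ x : V, r x * π x w) ↔
      α • ((Pi.single s 1 : V → ℝ) - r) =
        ((1 : Matrix V V ℝ) - (1 - α) • (walkMatrix G)ᵀ) *ᵥ p := by
  set M := (1 : Matrix V V ℝ) - (1 - α) • (walkMatrix G)ᵀ
  have hM : Function.Injective (M *ᵥ ·) :=
    mulVec_injective_one_sub_smul_transpose (walkMatrix_mem_rowStochastic G hd)
      (abs_lt.mpr ⟨by linarith [hα.2], by linarith [hα.1]⟩)
  have hMπ : ∀ t, M *ᵥ π t = α • Pi.single t 1 := fun t => by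
    rw [one_sub_smul_mulVec]
    exact sub_eq_of_eq_add (hπ t)
  have hMq : M *ᵥ (p + ∑ x, r x • π x) = M *ᵥ p + α • r := by
    rw [mulVec_add, mulVec_sum]
    congr 1
    funext w
    simp [mulVec_smul, hMπ, Pi.single_apply, mul_comm]
  calc (∀ w, π s w = p w + ∑ x, r x * π x w) ↔ π s = p + ∑ x, r x • π x := by
        simp only [funext_iff, Pi.add_apply, Finset.sum_apply, Pi.smul_apply, smul_eq_mul]
    _ ↔ M *ᵥ π s = M *ᵥ (p + ∑ x, r x • π x) := hM.eq_iff.symm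
    _ ↔ _ := by rw [hMπ, hMq, smul_sub, sub_eq_iff_eq_add]
end

section
/- The push operation preserves the ForwardPush invariant: if (p, r) satisfies the ForwardPush invariant with respect to s, and (p', r') is obtained from (p, r) by a push at any vertex u, then (p', r') also satisfies the ForwardPush invariant with respect to s. -/
/-!
Stack the PPVs as the rows of a matrix `Π`. The defining equations say `Π = α I + (1 - α) Π W`,
i.e. `Π (I - (1 - α) W) = α I`; since `α ≠ 0` and one-sided inverses of square matrices are
two-sided, also `Π = α I + (1 - α) W Π`, that is `π_u = α e_u + (1 - α) ∑ₓ W(u,x) π_x`.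
A push at `u` changes the right-hand side of the invariant by
`r(u) (α e_u + (1 - α) ∑ₓ W(u,x) π_x - π_u) = 0`; here `W(u,u) = 0` because `G` has no loops.
-/

open Matrix

/-- The estimate vector produced by a push at vertex `u`: `p' = p + α·r(u)·e_u`. -/
noncomputable def pushEstimate {V : Type*} [Fintype V] [DecidableEq V]
    (G : SimpleGraph V) [DecidableRel G.Adj] (α : ℝ) (p r : V → ℝ) (u : V) : V → ℝ :=
  p + (α * r u) • (Pi.single u 1 : V → ℝ)

/-- The residual vector produced by a push at vertex `u`: `r'(u) = 0` and
`r'(w) = r(w) + (1−α)·r(u)·A(u,w)/d(u)` for `w ≠ u`. -/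
noncomputable def pushResidual {V : Type*} [Fintype V] [DecidableEq V]
    (G : SimpleGraph V) [DecidableRel G.Adj] (α : ℝ) (r : V → ℝ) (u : V) : V → ℝ :=
  fun w => if w = u then 0
    else r w + (1 - α) * r u * (G.adjMatrix ℝ u w) / (G.degree u : ℝ)

theorem Matrix.mul_eq_smul_one_comm_s9 {n K : Type*} [Fintype n] [DecidableEq n] [Field K]
    {P M : Matrix n n K} {c : K} (hc : c ≠ 0) (h : P * M = c • 1) : M * P = c • 1 := by
  have hinv : (c⁻¹ • P) * M = 1 := by rw [smul_mul, h, smul_smul, inv_mul_cancel₀ hc, one_smul]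
  calc M * P = c • (M * (c⁻¹ • P)) := by
        rw [Matrix.mul_smul, smul_smul, mul_inv_cancel₀ hc, one_smul]
    _ = c • 1 := by rw [mul_eq_one_comm.mp hinv]

theorem Matrix.eq_smul_one_add_smul_mul_comm_s9 {n K : Type*} [Fintype n] [DecidableEq n] [Field K]
    {P W : Matrix n n K} {α : K} (hα : α ≠ 0) (h : P = α • 1 + (1 - α) • (P * W)) :
    P = α • 1 + (1 - α) • (W * P) := by
  have hright : P * (1 - (1 - α) • W) = α • 1 := by
    rw [mul_sub, mul_one, Matrix.mul_smul]
    nth_rewrite 1 [h]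
    abel
  have hleft := mul_eq_smul_one_comm_s9 hα hright
  rwa [sub_mul, one_mul, smul_mul, sub_eq_iff_eq_add] at hleft

section PushInvariant

variable {V : Type*} [Fintype V] [DecidableEq V] (G : SimpleGraph V) [DecidableRel G.Adj]

theorem walkMatrix_apply_s9 (u x : V) : walkMatrix G u x = G.adjMatrix ℝ u x / G.degree u := by
  rw [walkMatrix, diagonal_mul, div_eq_inv_mul]

theorem walkMatrix_apply_self (u : V) : walkMatrix G u u = 0 := by
  simp [walkMatrix_apply_s9]

theorem pushResidual_eq (α : ℝ) (r : V → ℝ) (u : V) :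
    pushResidual G α r u = r + r u • ((1 - α) • walkMatrix G u - Pi.single u 1) := by
  ext w
  rcases eq_or_ne w u with rfl | hw
  · simp [pushResidual, walkMatrix_apply_self]
  · simp only [pushResidual, if_neg hw, Pi.add_apply, Pi.smul_apply, Pi.sub_apply,
      Pi.single_eq_of_ne hw, walkMatrix_apply_s9, smul_eq_mul]
    ring

variable {G} {α : ℝ} {π : V → V → ℝ}

theorem ppv_matrix_eq
    (hπ : ∀ s : V, π s = α • (Pi.single s 1 : V → ℝ) + (1 - α) • ((walkMatrix G)ᵀ *ᵥ π s)) :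
    of π = α • 1 + (1 - α) • (of π * walkMatrix G) := by
  ext s w
  have hsw := congrFun (hπ s) w
  simp only [mulVec_transpose, Pi.add_apply, Pi.smul_apply, Pi.single_apply, eq_comm, smul_eq_mul,
    mul_ite, mul_one, mul_zero] at hsw
  simp only [of_apply, Matrix.add_apply, Matrix.smul_apply, one_apply, smul_eq_mul, mul_ite,
    mul_one, mul_zero, mul_apply_eq_vecMul]
  exact hsw

theorem ppv_source_recurrence (hα : α ≠ 0)
    (hπ : ∀ s : V, π s = α • (Pi.single s 1 : V → ℝ) + (1 - α) • ((walkMatrix G)ᵀ *ᵥ π s))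
    (u : V) : π u = α • Pi.single u 1 + (1 - α) • (walkMatrix G u ᵥ* of π) := by
  have := congrFun (Matrix.eq_smul_one_add_smul_mul_comm_s9 hα (ppv_matrix_eq hπ)) u
  ext w
  simpa [mul_apply_eq_vecMul, Pi.single_apply, one_apply, eq_comm] using congrFun this w

theorem pushEstimate_add_pushResidual_vecMul (u : V)
    (hu : π u = α • Pi.single u 1 + (1 - α) • (walkMatrix G u ᵥ* of π)) (p r : V → ℝ) :
    pushEstimate G α p r u + pushResidual G α r u ᵥ* of π = p + r ᵥ* of π := by
  rw [pushResidual_eq, add_vecMul, smul_vecMul, sub_vecMul, smul_vecMul, single_one_vecMul]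
  have hrow : (of π).row u = π u := rfl
  rw [hrow, hu, pushEstimate]
  module

end PushInvariant

theorem push_preserves_invariant_general
    {V : Type*} [Fintype V] [DecidableEq V]
    (G : SimpleGraph V) [DecidableRel G.Adj]
    (α : ℝ) (hα : α ∈ Set.Ioo (0 : ℝ) 1)
    (π : V → V → ℝ)
    (hπ : ∀ s : V,
      π s = α • (Pi.single s 1 : V → ℝ) + (1 - α) • ((walkMatrix G)ᵀ *ᵥ π s))
    (s : V) (p r : V → ℝ)
    (hinv : ∀ w : V, π s w = p w + ∑ x : V, r x * π x w)
    (u : V) :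
    ∀ w : V, π s w = pushEstimate G α p r u w +
      ∑ x : V, pushResidual G α r u x * π x w := by
  have hpush := pushEstimate_add_pushResidual_vecMul u
    (ppv_source_recurrence hα.1.ne' hπ u) p r
  exact fun w => (hinv w).trans (congrFun hpush w).symm

/-- The push operation preserves the ForwardPush invariant: if `(p, r)` satisfies the
invariant with respect to `s` and `(p', r')` is obtained by a push at any vertex `u`,
then `(p', r')` also satisfies the invariant with respect to `s`. -/
theorem push_preserves_invariant
    {V : Type*} [Fintype V] [DecidableEq V]
    (G : SimpleGraph V) [DecidableRel G.Adj]
    (hd : ∀ u : V, 0 < G.degree u)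
    (α : ℝ) (hα : α ∈ Set.Ioo (0 : ℝ) 1)
    (π : V → V → ℝ)
    (hπ : ∀ s : V,
      π s = α • (Pi.single s 1 : V → ℝ) + (1 - α) • ((walkMatrix G)ᵀ *ᵥ π s))
    (s : V) (p r : V → ℝ)
    (hinv : ∀ w : V, π s w = p w + ∑ x : V, r x * π x w)
    (u : V) :
    ∀ w : V, π s w = pushEstimate G α p r u w +
      ∑ x : V, pushResidual G α r u x * π x w :=
  push_preserves_invariant_general G α hα π hπ s p r hinv u
end

section
/- Run-time bound for ForwardPush: let ε > 0, let r⁰ = e_s, and for t = 1, …, T let r^t be obtained from r^{t−1} by a push at a vertex u_t (that is, r^t(u_t) = 0 and r^t(w) = r^{t−1}(w) + (1−α)·r^{t−1}(u_t)·A(u_t,w)/d(u_t) for w ≠ u_t). If r^{t−1}(u_t) > ε·d(u_t) for every t = 1, …, T, then ε·α·Σ_{t=1}^T d(u_t) ≤ 1 − Σ_{w∈V} r^T(w) ≤ 1; in particular Σ_{t=1}^T d(u_t) ≤ 1/(ε·α). -/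
/-! A push removes the mass `r(u)` from `u` and spreads `(1-α)·r(u)` over its neighbours, so the
total residual drops by exactly `α·r(u)`. Pushing only where `r(u) > ε·d(u)` therefore costs at
least `ε·α·d(u)` of the initial unit mass per push, and the residual stays nonnegative. -/

open Matrix

theorem SimpleGraph.sum_adjMatrix_apply {V α : Type*} [Fintype V] [NonAssocSemiring α]
    (G : SimpleGraph V) [DecidableRel G.Adj] (u : V) :
    ∑ w, G.adjMatrix α u w = G.degree u := by
  simpa [mulVec, dotProduct] using G.adjMatrix_mulVec_const_apply (a := (1 : α)) (v := u)

section Push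

variable {V : Type*} [Fintype V] [DecidableEq V] (G : SimpleGraph V) [DecidableRel G.Adj]

theorem pushResidual_eq_sub_single (α : ℝ) (r : V → ℝ) (u w : V) :
    pushResidual G α r u w =
      r w + (1 - α) * r u * G.adjMatrix ℝ u w / G.degree u
        - (Pi.single u (r u) : V → ℝ) w := by
  by_cases h : w = u
  · subst h; simp [pushResidual]
  · simp [pushResidual, h]

theorem sum_pushResidual (α : ℝ) (r : V → ℝ) {u : V} (hd : 0 < G.degree u) :
    ∑ w, pushResidual G α r u w = ∑ w, r w - α * r u := by
  have hd' : (G.degree u : ℝ) ≠ 0 := by positivity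
  simp only [pushResidual_eq_sub_single, Finset.sum_sub_distrib, Finset.sum_add_distrib,
    ← Finset.sum_div, ← Finset.mul_sum, G.sum_adjMatrix_apply, Fintype.sum_pi_single']
  field_simp
  ring

theorem pushResidual_nonneg {α : ℝ} (hα : α ≤ 1) {r : V → ℝ} (hr : 0 ≤ r) (u : V) :
    0 ≤ pushResidual G α r u := by
  intro w
  unfold pushResidual
  split_ifs
  · rfl
  · have hA : (0 : ℝ) ≤ G.adjMatrix ℝ u w := by rw [SimpleGraph.adjMatrix_apply]; positivity
    have hα' : 0 ≤ 1 - α := sub_nonneg.2 hα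
    have hru : 0 ≤ r u := hr u
    have hrw : 0 ≤ r w := hr w
    positivity

variable {α : ℝ} {T : ℕ} {u : ℕ → V} {r : ℕ → V → ℝ}

theorem pushResidual_seq_nonneg (hα : α ≤ 1) (h0 : 0 ≤ r 0)
    (hpush : ∀ t < T, r (t + 1) = pushResidual G α (r t) (u t)) :
    ∀ n ≤ T, 0 ≤ r n := by
  intro n hn
  induction n with
  | zero => exact h0
  | succ n ih =>
    rw [hpush n hn]
    exact pushResidual_nonneg G hα (ih (by omega)) _

theorem sum_pushResidual_seq (hd : ∀ t < T, 0 < G.degree (u t))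
    (hpush : ∀ t < T, r (t + 1) = pushResidual G α (r t) (u t)) :
    ∀ n ≤ T, ∑ w, r n w = ∑ w, r 0 w - α * ∑ t ∈ Finset.range n, r t (u t) := by
  intro n hn
  induction n with
  | zero => simp
  | succ n ih =>
    rw [hpush n hn, sum_pushResidual G _ _ (hd n hn), ih (by omega), Finset.sum_range_succ]
    ring

end Push

/-- Run-time bound for ForwardPush: starting from `r⁰ = e_s`, if each step `t < T` pushes
at a vertex `u t` whose residual exceeds `ε·d(u t)`, then
`ε·α·∑_{t<T} d(u t) ≤ 1 − ‖r^T‖₁ ≤ 1`; in particular `∑_{t<T} d(u t) ≤ 1/(ε·α)`. -/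
theorem forwardpush_runtime_bound
    {V : Type*} [Fintype V] [DecidableEq V]
    (G : SimpleGraph V) [DecidableRel G.Adj]
    (hd : ∀ u : V, 0 < G.degree u)
    (α : ℝ) (hα : α ∈ Set.Ioo (0 : ℝ) 1)
    (ε : ℝ) (hε : 0 < ε)
    (s : V) (T : ℕ) (u : ℕ → V) (r : ℕ → V → ℝ)
    (h0 : r 0 = (Pi.single s 1 : V → ℝ))
    (hpush : ∀ t < T, r (t + 1) = pushResidual G α (r t) (u t))
    (hbig : ∀ t < T, r t (u t) > ε * (G.degree (u t) : ℝ)) :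
    ε * α * ∑ t ∈ Finset.range T, (G.degree (u t) : ℝ) ≤ 1 - ∑ w : V, r T w ∧
    1 - ∑ w : V, r T w ≤ 1 ∧
    ∑ t ∈ Finset.range T, (G.degree (u t) : ℝ) ≤ 1 / (ε * α) := by
  obtain ⟨hα0, hα1⟩ := hα
  have hmass : ∑ w, r T w = 1 - α * ∑ t ∈ Finset.range T, r t (u t) := by
    rw [sum_pushResidual_seq G (fun t _ => hd (u t)) hpush T le_rfl, h0,
      Fintype.sum_pi_single']
  have hnonneg : 0 ≤ ∑ w, r T w :=
    Finset.sum_nonneg fun w _ =>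
      pushResidual_seq_nonneg G hα1.le (h0 ▸ Pi.single_nonneg.2 zero_le_one) hpush T le_rfl w
  have hwork : ε * ∑ t ∈ Finset.range T, (G.degree (u t) : ℝ) ≤
      ∑ t ∈ Finset.range T, r t (u t) := by
    rw [Finset.mul_sum]
    exact Finset.sum_le_sum fun t ht => (hbig t (Finset.mem_range.mp ht)).le
  have hcost : ε * α * ∑ t ∈ Finset.range T, (G.degree (u t) : ℝ) ≤ 1 - ∑ w, r T w := by
    rw [hmass, mul_right_comm]
    linarith [mul_le_mul_of_nonneg_right hwork hα0.le]
  refine ⟨hcost, by linarith, ?_⟩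
  rw [le_div_iff₀ (by positivity)]
  linarith
end

section
/- Per-entry estimation error of ForwardPush: if vectors p, r ∈ ℝ^V satisfy the ForwardPush invariant with respect to s (i.e., π_s(w) = p(w) + Σ_{x∈V} r(x)·π_x(w) for every w ∈ V) and |r(v)| ≤ ε·d(v) for every v ∈ V, then |π_s(u) − p(u)| ≤ ε·d(u) for every u ∈ V. -/
open Matrix

/-! The rescaled vectors `q_t = D⁻¹ π_t` are the columns of a matrix `Q` with `M Q = α I`, where
`M = D - (1 - α) A` is symmetric; hence `Q` is symmetric, i.e. `d(x) π_x(u) = d(u) π_u(x)`, and its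
columns are nonnegative by a minimum principle for `M`. Since `W` is stochastic, each `π_u` sums to
`1`, so `|π_s(u) - p(u)| = |∑ₓ r(x) π_x(u)| ≤ ε ∑ₓ d(x) π_x(u) = ε d(u) ∑ₓ π_u(x) = ε d(u)`. -/

theorem Matrix.IsSymm.of_mul_eq_smul_one_s12 {n K : Type*} [Fintype n] [DecidableEq n] [Field K]
    {M Q : Matrix n n K} {c : K} (hc : c ≠ 0) (hM : M.IsSymm) (hMQ : M * Q = c • 1) :
    Q.IsSymm := by
  have hQM : Qᵀ * M = c • 1 := by
    rw [← hM.eq, ← transpose_mul, hMQ, transpose_smul, transpose_one]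
  refine smul_right_injective _ hc ?_
  calc c • Qᵀ = Qᵀ * (M * Q) := by rw [hMQ, Matrix.mul_smul, Matrix.mul_one]
    _ = (Qᵀ * M) * Q := (Matrix.mul_assoc _ _ _).symm
    _ = c • Q := by rw [hQM, Matrix.smul_mul, Matrix.one_mul]

namespace SimpleGraph

variable {V : Type*} [Fintype V] [DecidableEq V] (G : SimpleGraph V) [DecidableRel G.Adj]

theorem nonneg_of_degMatrix_sub_smul_adjMatrix_mulVec_nonneg (hd : ∀ v, 0 < G.degree v)
    {β : ℝ} (hβ₀ : 0 ≤ β) (hβ₁ : β < 1) {x : V → ℝ}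
    (hx : 0 ≤ (G.degMatrix ℝ - β • G.adjMatrix ℝ) *ᵥ x) : 0 ≤ x := by
  intro v
  have : Nonempty V := ⟨v⟩
  obtain ⟨w, hw⟩ := Finite.exists_min x
  have hsum : G.degree w * x w ≤ ∑ u ∈ G.neighborFinset w, x u := by
    simpa [card_neighborFinset_eq_degree] using
      Finset.card_nsmul_le_sum (G.neighborFinset w) x (x w) fun u _ => hw u
  have hxw := hx w
  simp only [sub_mulVec, smul_mulVec, Pi.sub_apply, Pi.smul_apply, smul_eq_mul,
    degMatrix_mulVec_apply, adjMatrix_mulVec_apply, Pi.zero_apply] at hxw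
  have hdw : (0 : ℝ) < G.degree w := by exact_mod_cast hd w
  have hpos : 0 < (1 - β) * G.degree w := mul_pos (by linarith) hdw
  have hxw' : 0 ≤ (1 - β) * G.degree w * x w := by nlinarith
  exact ((mul_nonneg_iff_of_pos_left hpos).mp hxw').trans (hw v)

theorem walkMatrix_mulVec_one (hd : ∀ v, 0 < G.degree v) : walkMatrix G *ᵥ 1 = 1 := by
  ext v
  have : (G.degree v : ℝ) ≠ 0 := by exact_mod_cast (hd v).ne'
  simp [walkMatrix, ← mulVec_mulVec, mulVec_diagonal, this]

theorem walkMatrix_transpose_mulVec (x : V → ℝ) :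
    (walkMatrix G)ᵀ *ᵥ x = G.adjMatrix ℝ *ᵥ fun w => x w / G.degree w := by
  rw [walkMatrix, transpose_mul, transpose_adjMatrix, diagonal_transpose, ← mulVec_mulVec]
  congr 1
  ext w
  rw [mulVec_diagonal, div_eq_inv_mul]

theorem degMatrix_mulVec_div_degree (hd : ∀ v, 0 < G.degree v) (x : V → ℝ) :
    G.degMatrix ℝ *ᵥ (fun w => x w / G.degree w) = x := by
  ext v
  have : (G.degree v : ℝ) ≠ 0 := by exact_mod_cast (hd v).ne'
  rw [degMatrix_mulVec_apply, mul_div_cancel₀ _ this]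

def IsPersonalizedPageRank (α : ℝ) (s : V) (x : V → ℝ) : Prop :=
  x = α • Pi.single s 1 + (1 - α) • ((walkMatrix G)ᵀ *ᵥ x)

variable {G} (hd : ∀ v, 0 < G.degree v) {α : ℝ}
include hd

namespace IsPersonalizedPageRank

variable {t : V} {x : V → ℝ} (hx : G.IsPersonalizedPageRank α t x)
include hx

theorem sum_eq_one (hα : α ≠ 0) : ∑ w, x w = 1 := by
  have hWx : 1 ⬝ᵥ ((walkMatrix G)ᵀ *ᵥ x) = 1 ⬝ᵥ x := by
    rw [dotProduct_mulVec, vecMul_transpose, walkMatrix_mulVec_one G hd]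
  have h := congrArg (1 ⬝ᵥ ·) hx
  simp only [dotProduct_add, dotProduct_smul, hWx, one_dotProduct, Finset.sum_pi_single',
    Finset.mem_univ, if_true, smul_eq_mul, mul_one] at h
  exact mul_left_cancel₀ hα (by linarith)

theorem degMatrix_sub_smul_adjMatrix_mulVec_div_degree :
    (G.degMatrix ℝ - (1 - α) • G.adjMatrix ℝ) *ᵥ (fun w => x w / G.degree w) =
      α • Pi.single t 1 := by
  rw [sub_mulVec, smul_mulVec, degMatrix_mulVec_div_degree G hd,
    ← walkMatrix_transpose_mulVec, sub_eq_iff_eq_add]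
  exact hx

theorem nonneg (hα : α ∈ Set.Ioo (0 : ℝ) 1) : 0 ≤ x := by
  intro w
  have hsingle : 0 ≤ α • (Pi.single t 1 : V → ℝ) :=
    smul_nonneg hα.1.le (Pi.single_nonneg.2 zero_le_one)
  have hq := nonneg_of_degMatrix_sub_smul_adjMatrix_mulVec_nonneg G hd (β := 1 - α)
    (by linarith [hα.2]) (by linarith [hα.1])
    (hx.degMatrix_sub_smul_adjMatrix_mulVec_div_degree hd ▸ hsingle) w
  simpa using (le_div_iff₀ (by exact_mod_cast hd w : (0 : ℝ) < G.degree w)).mp hq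

end IsPersonalizedPageRank

theorem degree_mul_personalizedPageRank_comm (hα : α ≠ 0) {π : V → V → ℝ}
    (hπ : ∀ s, G.IsPersonalizedPageRank α s (π s)) (x u : V) :
    G.degree x * π x u = G.degree u * π u x := by
  have hMQ : (G.degMatrix ℝ - (1 - α) • G.adjMatrix ℝ) *
      Matrix.of (fun w t => π t w / G.degree w) = α • 1 := by
    ext w t
    have h := congrFun ((hπ t).degMatrix_sub_smul_adjMatrix_mulVec_div_degree hd) w
    rw [Pi.smul_apply, Pi.single_apply] at h
    rw [Matrix.smul_apply, one_apply]
    exact h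
  have hQ := (((G.isSymm_degMatrix ℝ).sub (G.isSymm_adjMatrix.smul _)).of_mul_eq_smul_one_s12
    hα hMQ).apply x u
  have hx : (G.degree x : ℝ) ≠ 0 := by exact_mod_cast (hd x).ne'
  have hu : (G.degree u : ℝ) ≠ 0 := by exact_mod_cast (hd u).ne'
  simp only [Matrix.of_apply] at hQ
  field_simp at hQ
  linarith

end SimpleGraph

theorem forwardpush_estimation_error_general
    {V : Type*} [Fintype V] [DecidableEq V]
    (G : SimpleGraph V) [DecidableRel G.Adj]
    (hd : ∀ u : V, 0 < G.degree u)
    (α : ℝ) (hα : α ∈ Set.Ioo (0 : ℝ) 1)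
    (π : V → V → ℝ)
    (hπ : ∀ s : V,
      π s = α • (Pi.single s 1 : V → ℝ) + (1 - α) • ((walkMatrix G)ᵀ *ᵥ π s))
    (ε : ℝ)
    (s : V) (p r : V → ℝ)
    (hinv : ∀ w : V, π s w = p w + ∑ x : V, r x * π x w)
    (hres : ∀ v : V, |r v| ≤ ε * (G.degree v : ℝ)) :
    ∀ u : V, |π s u - p u| ≤ ε * (G.degree u : ℝ) := by
  intro u
  have hppr : ∀ t, G.IsPersonalizedPageRank α t (π t) := hπ
  have hnn (x : V) : 0 ≤ π x u := (hppr x).nonneg hd hα u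
  rw [show π s u - p u = ∑ x, r x * π x u by linarith [hinv u]]
  calc |∑ x, r x * π x u| ≤ ∑ x, |r x| * π x u := by
        refine (Finset.abs_sum_le_sum_abs _ _).trans_eq (Finset.sum_congr rfl fun x _ => ?_)
        rw [abs_mul, abs_of_nonneg (hnn x)]
    _ ≤ ∑ x, ε * G.degree x * π x u :=
        Finset.sum_le_sum fun x _ => mul_le_mul_of_nonneg_right (hres x) (hnn x)
    _ = ε * G.degree u * ∑ x, π u x := by
        simp only [Finset.mul_sum, mul_assoc,
          SimpleGraph.degree_mul_personalizedPageRank_comm hd hα.1.ne' hppr]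
    _ = ε * G.degree u := by rw [(hppr u).sum_eq_one hd hα.1.ne', mul_one]

/-- Per-entry estimation error of ForwardPush: if `(p, r)` satisfies the ForwardPush
invariant with respect to `s` and `|r(v)| ≤ ε·d(v)` for every `v`, then
`|π_s(u) − p(u)| ≤ ε·d(u)` for every `u`. -/
theorem forwardpush_estimation_error
    {V : Type*} [Fintype V] [DecidableEq V]
    (G : SimpleGraph V) [DecidableRel G.Adj]
    (hd : ∀ u : V, 0 < G.degree u)
    (α : ℝ) (hα : α ∈ Set.Ioo (0 : ℝ) 1)
    (π : V → V → ℝ)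
    (hπ : ∀ s : V,
      π s = α • (Pi.single s 1 : V → ℝ) + (1 - α) • ((walkMatrix G)ᵀ *ᵥ π s))
    (ε : ℝ) (hε : 0 < ε)
    (s : V) (p r : V → ℝ)
    (hinv : ∀ w : V, π s w = p w + ∑ x : V, r x * π x w)
    (hres : ∀ v : V, |r v| ≤ ε * (G.degree v : ℝ)) :
    ∀ u : V, |π s u - p u| ≤ ε * (G.degree u : ℝ) :=
  forwardpush_estimation_error_general G hd α hα π hπ ε s p r hinv hres
end

section
/- Edge deletion preserves the ForwardPush invariant under the DynamicSNE update: let u and v be adjacent vertices of G with d(u) ≥ 2 and d(v) ≥ 2, and let G' be the graph G with the edge {u,v} deleted, with degree function d' (so d'(u) = d(u)−1, d'(v) = d(v)−1, d'(w) = d(w) otherwise) and personalized PageRank vectors π'_x. Suppose p, r ∈ ℝ^V satisfy π_s(w) = p(w) + Σ_{x∈V} r(x)·π_x(w) for every w ∈ V. Define Δ_u = −p(u)/d(u), Δ_v = −p(v)/d(v), p' = p + Δ_u·e_u + Δ_v·e_v, and r' equal to r except r'(u) = r(u) − Δ_u/α + (1−α)·Δ_v/α and r'(v) = r(v) − Δ_v/α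 + (1−α)·Δ_u/α. Then π'_s(w) = p'(w) + Σ_{x∈V} r'(x)·π'_x(w) for every w ∈ V. -/
/-!
Applying `M = I - (1 - α) Wᵀ` (`pprMatrix`), which sends `π x` to `α e_x`, turns the
ForwardPush invariant `π_s = p + ∑ₓ r x π_x` into the residual equation `M p + α r = α e_s`;
conversely `M` is invertible (strictly diagonally dominant by columns, since the rows of `W`
sum to `1`), so the residual equation implies the invariant. Because `Wᵀ p = A (p / d)`, the
update is designed to keep the mass per edge `p / d` unchanged: `p' / d' = p / d`. Hence
`W'ᵀ p'` differs from `Wᵀ p` only through the deleted edge, by `Δv e_u + Δu e_v`, and the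
change of the residual `r'` compensates this exactly.
-/

open Matrix

open Finset

section

variable {V : Type*} [DecidableEq V]

section PersonalizedPageRank

variable [Fintype V] (H : SimpleGraph V) [DecidableRel H.Adj] (α : ℝ)

theorem walkMatrix_apply_s15 (i j : V) :
    walkMatrix H i j = (H.degree i : ℝ)⁻¹ * H.adjMatrix ℝ i j :=
  diagonal_mul _ _ _ _

theorem walkMatrix_nonneg (i j : V) : 0 ≤ walkMatrix H i j := by
  rw [walkMatrix_apply_s15]
  exact mul_nonneg (by positivity) (by simp [SimpleGraph.adjMatrix_apply, apply_ite])

theorem walkMatrix_apply_self_s15 (i : V) : walkMatrix H i i = 0 := by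
  simp [walkMatrix_apply_s15]

theorem sum_walkMatrix_row {i : V} (hi : 0 < H.degree i) : ∑ j, walkMatrix H i j = 1 := by
  have hrow : ∑ j, H.adjMatrix ℝ i j = H.degree i := by
    simpa [mulVec, dotProduct] using H.adjMatrix_mulVec_const_apply (a := (1 : ℝ)) (v := i)
  simp_rw [walkMatrix_apply_s15, ← Finset.mul_sum, hrow]
  exact inv_mul_cancel₀ (by positivity)

theorem walkMatrix_transpose_mulVec (f : V → ℝ) :
    (walkMatrix H)ᵀ *ᵥ f = H.adjMatrix ℝ *ᵥ fun x => f x / H.degree x := by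
  rw [walkMatrix, transpose_mul, diagonal_transpose, H.transpose_adjMatrix, ← mulVec_mulVec]
  congr 1
  ext x
  simp [mulVec_diagonal, div_eq_inv_mul]

def IsPersonalizedPageRank (π : V → V → ℝ) : Prop :=
  ∀ x, π x = α • (Pi.single x 1 : V → ℝ) + (1 - α) • ((walkMatrix H)ᵀ *ᵥ π x)

noncomputable def pprMatrix : Matrix V V ℝ := 1 - (1 - α) • (walkMatrix H)ᵀ

theorem det_pprMatrix_ne_zero (hα : α ∈ Set.Ioo 0 1) (hd : ∀ w, 0 < H.degree w) :
    (pprMatrix H α).det ≠ 0 := by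
  refine det_ne_zero_of_sum_col_lt_diag fun k => ?_
  calc ∑ i ∈ univ.erase k, ‖pprMatrix H α i k‖
      = (1 - α) * ∑ i ∈ univ.erase k, walkMatrix H k i := by
        rw [Finset.mul_sum]
        refine Finset.sum_congr rfl fun i hi => ?_
        simp [pprMatrix, one_apply_ne (Finset.ne_of_mem_erase hi), abs_of_pos (sub_pos.2 hα.2),
          walkMatrix_nonneg]
    _ = 1 - α := by
        rw [Finset.sum_erase _ (walkMatrix_apply_self_s15 H k), sum_walkMatrix_row H (hd k), mul_one]
    _ < ‖pprMatrix H α k k‖ := by simp [pprMatrix, walkMatrix_apply_self_s15, hα.1]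

variable {H α} {π : V → V → ℝ}

theorem IsPersonalizedPageRank.pprMatrix_mulVec (hπ : IsPersonalizedPageRank H α π) (x : V) :
    pprMatrix H α *ᵥ π x = α • Pi.single x 1 := by
  rw [pprMatrix, sub_mulVec, one_mulVec, smul_mulVec, sub_eq_iff_eq_add]
  exact hπ x

theorem IsPersonalizedPageRank.pprMatrix_mulVec_add_sum (hπ : IsPersonalizedPageRank H α π)
    (p r : V → ℝ) :
    pprMatrix H α *ᵥ (p + ∑ x, r x • π x) = pprMatrix H α *ᵥ p + α • r := by
  simp_rw [mulVec_add, mulVec_sum, mulVec_smul, hπ.pprMatrix_mulVec]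
  congr 1
  conv_rhs => rw [← Finset.univ_sum_single r, Finset.smul_sum]
  refine Finset.sum_congr rfl fun x _ => ?_
  rw [smul_comm, ← Pi.single_smul', smul_eq_mul, mul_one]

theorem IsPersonalizedPageRank.eq_add_sum_iff (hα : α ∈ Set.Ioo 0 1)
    (hd : ∀ w, 0 < H.degree w) (hπ : IsPersonalizedPageRank H α π) (s : V) (p r : V → ℝ) :
    π s = p + ∑ x, r x • π x ↔ pprMatrix H α *ᵥ p + α • r = α • Pi.single s 1 := by
  rw [← hπ.pprMatrix_mulVec_add_sum, ← hπ.pprMatrix_mulVec s, eq_comm]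
  exact (mulVec_injective_of_det_ne_zero (det_pprMatrix_ne_zero H α hα hd)).eq_iff.symm

end PersonalizedPageRank

section DeleteEdge

def IsEdgeDeletion (G G' : SimpleGraph V) (u v : V) : Prop :=
  ∀ a b, G'.Adj a b ↔ G.Adj a b ∧ ¬((a = u ∧ b = v) ∨ (a = v ∧ b = u))

variable {G G' : SimpleGraph V} [DecidableRel G.Adj] [DecidableRel G'.Adj] {u v : V}

theorem IsEdgeDeletion.adjMatrix_eq (hG' : IsEdgeDeletion G G' u v) (hadj : G.Adj u v) :
    G.adjMatrix ℝ = G'.adjMatrix ℝ + (single u v 1 + single v u 1) := by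
  ext a b
  simp only [Matrix.add_apply, SimpleGraph.adjMatrix_apply, single_apply, hG' a b]
  rcases em (a = u ∧ b = v) with ⟨rfl, rfl⟩ | h₁
  · simp [hadj, hadj.ne.symm]
  rcases em (a = v ∧ b = u) with ⟨rfl, rfl⟩ | h₂
  · simp [hadj.symm, hadj.ne.symm]
  have h₁' : ¬(u = a ∧ v = b) := fun ⟨hu, hv⟩ => h₁ ⟨hu.symm, hv.symm⟩
  have h₂' : ¬(v = a ∧ u = b) := fun ⟨hv, hu⟩ => h₂ ⟨hv.symm, hu.symm⟩
  simp [h₁, h₂, h₁', h₂']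

variable [Fintype V]

theorem IsEdgeDeletion.adjMatrix_mulVec (hG' : IsEdgeDeletion G G' u v) (hadj : G.Adj u v)
    (f : V → ℝ) :
    G.adjMatrix ℝ *ᵥ f = G'.adjMatrix ℝ *ᵥ f + (Pi.single u (f v) + Pi.single v (f u)) := by
  rw [hG'.adjMatrix_eq hadj, add_mulVec, add_mulVec, single_mulVec, single_mulVec, one_mul,
    one_mul]
  rfl

theorem IsEdgeDeletion.degree_eq (hG' : IsEdgeDeletion G G' u v) (hadj : G.Adj u v) (x : V) :
    (G.degree x : ℝ) = G'.degree x + ((Pi.single u 1 : V → ℝ) x + (Pi.single v 1 : V → ℝ) x) := by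
  simpa only [SimpleGraph.adjMatrix_mulVec_const_apply, Pi.add_apply, Function.const_apply,
    mul_one] using congrFun (hG'.adjMatrix_mulVec hadj (Function.const V 1)) x

theorem IsEdgeDeletion.walkMatrix_transpose_mulVec (hG' : IsEdgeDeletion G G' u v)
    (hadj : G.Adj u v) (hd : ∀ w, 0 < G.degree w) (hd' : ∀ w, 0 < G'.degree w)
    {p : V → ℝ} {Δu Δv : ℝ} (hΔu : Δu = -(p u) / G.degree u) (hΔv : Δv = -(p v) / G.degree v) :
    (walkMatrix G')ᵀ *ᵥ (p + Δu • Pi.single u 1 + Δv • Pi.single v 1) =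
      (walkMatrix G)ᵀ *ᵥ p + (Δv • Pi.single u 1 + Δu • Pi.single v 1) := by
  set φ : V → ℝ := fun x => p x / G.degree x
  have hφu : Δu = -φ u := by rw [hΔu, neg_div]
  have hφv : Δv = -φ v := by rw [hΔv, neg_div]
  have hp' : p + Δu • Pi.single u 1 + Δv • Pi.single v 1 = fun x => φ x * G'.degree x := by
    ext x
    have hsingle (y : V) : φ y * (Pi.single y 1 : V → ℝ) x = φ x * (Pi.single y 1 : V → ℝ) x := by
      rw [Pi.single_apply]
      split_ifs with h <;> simp [h]
    have hdx : (G.degree x : ℝ) ≠ 0 := Nat.cast_ne_zero.2 (hd x).ne'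
    simp only [Pi.add_apply, Pi.smul_apply, smul_eq_mul, hφu, hφv, neg_mul, hsingle, φ]
    field_simp
    linear_combination p x * hG'.degree_eq hadj x
  have hφ : (fun x => φ x * G'.degree x / G'.degree x) = φ :=
    funext fun x => mul_div_cancel_right₀ _ (Nat.cast_ne_zero.2 (hd' x).ne')
  rw [hp', _root_.walkMatrix_transpose_mulVec, _root_.walkMatrix_transpose_mulVec, hφ,
    hG'.adjMatrix_mulVec hadj φ, hφu, hφv]
  simp only [neg_smul, ← Pi.single_smul', smul_eq_mul, mul_one]
  abel

theorem IsEdgeDeletion.pprMatrix_mulVec (hG' : IsEdgeDeletion G G' u v) (hadj : G.Adj u v)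
    (hd : ∀ w, 0 < G.degree w) (hd' : ∀ w, 0 < G'.degree w) (α : ℝ)
    {p : V → ℝ} {Δu Δv : ℝ} (hΔu : Δu = -(p u) / G.degree u) (hΔv : Δv = -(p v) / G.degree v) :
    pprMatrix G' α *ᵥ (p + Δu • Pi.single u 1 + Δv • Pi.single v 1) =
      pprMatrix G α *ᵥ p + (Δu - (1 - α) * Δv) • Pi.single u 1 +
        (Δv - (1 - α) * Δu) • Pi.single v 1 := by
  rw [pprMatrix, pprMatrix, sub_mulVec, sub_mulVec, one_mulVec, one_mulVec, smul_mulVec,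
    smul_mulVec, hG'.walkMatrix_transpose_mulVec hadj hd hd' hΔu hΔv]
  module

end DeleteEdge

theorem smul_eq_add_of_residual_update {α Δu Δv : ℝ} (hα : α ≠ 0) {u v : V} (huv : u ≠ v)
    {r r' : V → ℝ} (hr'u : r' u = r u - Δu / α + (1 - α) * Δv / α)
    (hr'v : r' v = r v - Δv / α + (1 - α) * Δu / α)
    (hr' : ∀ w, w ≠ u → w ≠ v → r' w = r w) :
    α • r' = α • r + ((1 - α) * Δv - Δu) • Pi.single u 1 +
      ((1 - α) * Δu - Δv) • Pi.single v 1 := by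
  ext w
  simp only [Pi.add_apply, Pi.smul_apply, smul_eq_mul, Pi.single_apply]
  rcases eq_or_ne w u with rfl | hwu
  · rw [if_pos rfl, if_neg huv, hr'u]
    field_simp
    ring
  rcases eq_or_ne w v with rfl | hwv
  · rw [if_neg hwu, if_pos rfl, hr'v]
    field_simp
    ring
  rw [if_neg hwu, if_neg hwv, hr' w hwu hwv]
  ring

end

theorem edge_deletion_preserves_invariant_general
    {V : Type*} [Fintype V] [DecidableEq V]
    (G G' : SimpleGraph V) [DecidableRel G.Adj] [DecidableRel G'.Adj]
    (α : ℝ) (hα : α ∈ Set.Ioo (0 : ℝ) 1)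
    (u v : V) (hadj : G.Adj u v)
    (hG' : ∀ a b : V,
      G'.Adj a b ↔ G.Adj a b ∧ ¬((a = u ∧ b = v) ∨ (a = v ∧ b = u)))
    (hd : ∀ w : V, 0 < G.degree w) (hd' : ∀ w : V, 0 < G'.degree w)
    (π π' : V → V → ℝ)
    (hπ : ∀ x : V,
      π x = α • (Pi.single x 1 : V → ℝ) + (1 - α) • ((walkMatrix G)ᵀ *ᵥ π x))
    (hπ' : ∀ x : V,
      π' x = α • (Pi.single x 1 : V → ℝ) + (1 - α) • ((walkMatrix G')ᵀ *ᵥ π' x))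
    (s : V) (p r : V → ℝ)
    (hinv : ∀ w : V, π s w = p w + ∑ x : V, r x * π x w)
    (Δu Δv : ℝ)
    (hΔu : Δu = -(p u) / (G.degree u : ℝ)) (hΔv : Δv = -(p v) / (G.degree v : ℝ))
    (p' r' : V → ℝ)
    (hp' : p' = p + Δu • (Pi.single u 1 : V → ℝ) + Δv • (Pi.single v 1 : V → ℝ))
    (hr'u : r' u = r u - Δu / α + (1 - α) * Δv / α)
    (hr'v : r' v = r v - Δv / α + (1 - α) * Δu / α)
    (hr' : ∀ w : V, w ≠ u → w ≠ v → r' w = r w) :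
    ∀ w : V, π' s w = p' w + ∑ x : V, r' x * π' x w := by
  have hres : pprMatrix G α *ᵥ p + α • r = α • Pi.single s 1 :=
    (IsPersonalizedPageRank.eq_add_sum_iff hα hd hπ s p r).1
      (funext fun w => by simpa [Finset.sum_apply] using hinv w)
  have hres' : pprMatrix G' α *ᵥ p' + α • r' = α • Pi.single s 1 := by
    rw [hp', IsEdgeDeletion.pprMatrix_mulVec hG' hadj hd hd' α hΔu hΔv,
      smul_eq_add_of_residual_update hα.1.ne' hadj.ne hr'u hr'v hr', ← hres]
    module
  intro w
  simpa [Finset.sum_apply] using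
    congrFun ((IsPersonalizedPageRank.eq_add_sum_iff hα hd' hπ' s p' r').2 hres') w

/-- Edge deletion preserves the ForwardPush invariant under the DynamicSNE update:
if `G'` is `G` with the edge `{u,v}` deleted (where `u ~ v`, `d(u) ≥ 2`, `d(v) ≥ 2`),
`(p, r)` satisfies the ForwardPush invariant for `s` on `G`, and with
`Δ_u = −p(u)/d(u)`, `Δ_v = −p(v)/d(v)` we set `p' = p + Δ_u·e_u + Δ_v·e_v`,
`r'(u) = r(u) − Δ_u/α + (1−α)·Δ_v/α`, `r'(v) = r(v) − Δ_v/α + (1−α)·Δ_u/α`, and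
`r'(w) = r(w)` otherwise, then `(p', r')` satisfies the ForwardPush invariant for `s`
on `G'`. -/
theorem edge_deletion_preserves_invariant
    {V : Type*} [Fintype V] [DecidableEq V]
    (G G' : SimpleGraph V) [DecidableRel G.Adj] [DecidableRel G'.Adj]
    (α : ℝ) (hα : α ∈ Set.Ioo (0 : ℝ) 1)
    (u v : V) (hadj : G.Adj u v)
    (hdu : 2 ≤ G.degree u) (hdv : 2 ≤ G.degree v)
    (hG' : ∀ a b : V,
      G'.Adj a b ↔ G.Adj a b ∧ ¬((a = u ∧ b = v) ∨ (a = v ∧ b = u)))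
    (hd : ∀ w : V, 0 < G.degree w) (hd' : ∀ w : V, 0 < G'.degree w)
    (π π' : V → V → ℝ)
    (hπ : ∀ x : V,
      π x = α • (Pi.single x 1 : V → ℝ) + (1 - α) • ((walkMatrix G)ᵀ *ᵥ π x))
    (hπ' : ∀ x : V,
      π' x = α • (Pi.single x 1 : V → ℝ) + (1 - α) • ((walkMatrix G')ᵀ *ᵥ π' x))
    (s : V) (p r : V → ℝ)
    (hinv : ∀ w : V, π s w = p w + ∑ x : V, r x * π x w)
    (Δu Δv : ℝ)
    (hΔu : Δu = -(p u) / (G.degree u : ℝ)) (hΔv : Δv = -(p v) / (G.degree v : ℝ))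
    (p' r' : V → ℝ)
    (hp' : p' = p + Δu • (Pi.single u 1 : V → ℝ) + Δv • (Pi.single v 1 : V → ℝ))
    (hr'u : r' u = r u - Δu / α + (1 - α) * Δv / α)
    (hr'v : r' v = r v - Δv / α + (1 - α) * Δu / α)
    (hr' : ∀ w : V, w ≠ u → w ≠ v → r' w = r w) :
    ∀ w : V, π' s w = p' w + ∑ x : V, r' x * π' x w :=
  edge_deletion_preserves_invariant_general G G' α hα u v hadj hG' hd hd' π π' hπ hπ' s p r hinv Δu
    Δv hΔu hΔv p' r' hp' hr'u hr'v hr'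
end
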